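/- arXiv:2404.02825 — 2 statements merged into one kernel-verified Lean document; each statement's English description precedes it below -/
import Mathlib

section
/- Let p, γ > 0 and define π_D = (√γ/2)(1 - 2√γ p + √(1 + 4γp²)) and π_O = √γ - π_D. Then the 2×2 matrix Π with diagonal entries π_D and off-diagonal entries π_O is symmetric positive definite and satisfies the continuous-time algebraic Riccati equation 2ÃΠ - (1/γ)Π² + I = 0, where Ã is the 2×2 matrix with diagonal entries -p and off-diagonal entries p. -/
open Matrix Real

/-!
Both `Ã` and `Π` are diagonal in the eigenbasis `(1, 1)`, `(1, -1)`, where `Ã` has eigenvalues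
`0` and `-2p` and `Π` has eigenvalues `σ = π_D + π_O` and `δ = π_D - π_O`. The Riccati equation
therefore decouples into `σ² = γ` and `δ² + 4pγδ = γ`, whose positive roots are `σ = √γ` and
`δ = √γ (√(1 + 4γp²) - 2√γ p)`; positivity of both eigenvalues gives positive definiteness.
-/

theorem Matrix.posDef_fin_two_of_add_pos_of_sub_pos {a b : ℝ} (hadd : 0 < a + b)
    (hsub : 0 < a - b) : (!![a, b; b, a]).PosDef := by
  refine posDef_iff_dotProduct_mulVec.mpr ⟨?_, fun x hx => ?_⟩
  · exact isHermitian_iff_isSymm.mpr (IsSymm.ext fun i j => by fin_cases i <;> fin_cases j <;> rfl)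
  · have hquad : star x ⬝ᵥ (!![a, b; b, a] *ᵥ x)
        = ((a + b) * (x 0 + x 1) ^ 2 + (a - b) * (x 0 - x 1) ^ 2) / 2 := by
      simp only [Pi.star_apply, star_trivial, mulVec, dotProduct, of_apply,
        cons_val', cons_val_fin_one, Fin.sum_univ_two, cons_val_zero, cons_val_one]
      ring
    have hx' : x 0 + x 1 ≠ 0 ∨ x 0 - x 1 ≠ 0 := by
      by_contra! h
      exact hx (funext fun i => by fin_cases i <;> simp <;> linarith [h.1, h.2])
    rw [hquad]
    rcases hx' with h | h
    · have := mul_pos hadd (sq_pos_of_ne_zero h)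
      positivity
    · have := mul_pos hsub (sq_pos_of_ne_zero h)
      positivity

theorem riccati_fin_two_of_add_of_sub {p γ d o : ℝ} (hγ : γ ≠ 0) (hadd : (d + o) ^ 2 = γ)
    (hsub : (d - o) ^ 2 + 4 * p * γ * (d - o) = γ) :
    (2 : ℝ) • (!![-p, p; p, -p] * !![d, o; o, d]) - γ⁻¹ • (!![d, o; o, d] * !![d, o; o, d])
      + 1 = 0 := by
  rw [mul_fin_two, mul_fin_two, one_fin_two, ← Matrix.ext_iff]
  simp only [Fin.forall_fin_two, Matrix.smul_apply, Matrix.sub_apply, Matrix.add_apply, of_apply,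
    cons_val_zero, cons_val_one, cons_val_fin_one, Matrix.zero_apply, smul_eq_mul]
  refine ⟨⟨?_, ?_⟩, ?_, ?_⟩ <;> field_simp
  · linear_combination (-1 / 2) * (hadd + hsub)
  · linear_combination (1 / 2) * (hsub - hadd)
  · linear_combination (1 / 2) * (hsub - hadd)
  · linear_combination (-1 / 2) * (hadd + hsub)

theorem stmt0_general (p γ : ℝ) (hγ : 0 < γ)
    (πD πO : ℝ)
    (hπD : πD = (Real.sqrt γ / 2) * (1 - 2 * Real.sqrt γ * p + Real.sqrt (1 + 4 * γ * p ^ 2)))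
    (hπO : πO = Real.sqrt γ - πD)
    (Pi : Matrix (Fin 2) (Fin 2) ℝ) (hPi : Pi = !![πD, πO; πO, πD])
    (Atil : Matrix (Fin 2) (Fin 2) ℝ) (hA : Atil = !![-p, p; p, -p]) :
    Pi.IsSymm ∧ Pi.PosDef ∧
      (2 : ℝ) • (Atil * Pi) - γ⁻¹ • (Pi * Pi) + 1 = 0 := by
  subst hPi hA
  set s := √γ
  set r := √(1 + 4 * γ * p ^ 2)
  have hs : s ^ 2 = γ := sq_sqrt hγ.le
  have hr : r ^ 2 = 1 + (2 * s * p) ^ 2 := by rw [sq_sqrt (by positivity), ← hs]; ring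
  have hgap : 2 * s * p < r := lt_sqrt_of_sq_lt (by rw [← hs]; linarith)
  have hadd : πD + πO = s := by rw [hπO]; ring
  have hsub : πD - πO = s * (r - 2 * s * p) := by rw [hπO, hπD]; ring
  have hPD : (!![πD, πO; πO, πD]).PosDef :=
    posDef_fin_two_of_add_pos_of_sub_pos (hadd ▸ sqrt_pos.mpr hγ)
      (hsub ▸ mul_pos (sqrt_pos.mpr hγ) (sub_pos.mpr hgap))
  refine ⟨isHermitian_iff_isSymm.mp hPD.isHermitian, hPD,
    riccati_fin_two_of_add_of_sub hγ.ne' ?_ ?_⟩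
  · rw [hadd, hs]
  · rw [hsub, ← hs]; linear_combination s ^ 2 * hr

theorem stmt0 (p γ : ℝ) (hp : 0 < p) (hγ : 0 < γ)
    (πD πO : ℝ)
    (hπD : πD = (Real.sqrt γ / 2) * (1 - 2 * Real.sqrt γ * p + Real.sqrt (1 + 4 * γ * p ^ 2)))
    (hπO : πO = Real.sqrt γ - πD)
    (Pi : Matrix (Fin 2) (Fin 2) ℝ) (hPi : Pi = !![πD, πO; πO, πD])
    (Atil : Matrix (Fin 2) (Fin 2) ℝ) (hA : Atil = !![-p, p; p, -p]) :
    Pi.IsSymm ∧ Pi.PosDef ∧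
      (2 : ℝ) • (Atil * Pi) - γ⁻¹ • (Pi * Pi) + 1 = 0 :=
  stmt0_general p γ hγ πD πO hπD hπO Pi hPi Atil hA
end

section
/- Consider the discrete-time algebraic Riccati equation Π = Q + AᵀΠA − AᵀΠB(R + BᵀΠB)⁻¹BᵀΠA with A = I + Δt Ã, B = Δt I, Q = Δt I, R = Δt γ I (à fixed, γ > 0). Suppose Π_Δt solves this DARE for each Δt > 0 and Π_Δt → Π₀ as Δt → 0 with Π₀ positive semidefinite. Then Π₀ satisfies the continuous-time algebraic Riccati equation ÃᵀΠ₀ + Π₀Ã − (1/γ)Π₀² + I = 0. -/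
/-!
With `A = 1 + Δt • Ã`, `B = Q = Δt • 1` and `R = (Δt * γ) • 1`, the gain matrix of the DARE is
`Δt • (γ • 1 + Δt • Π)`, so `DARE(Π) - Π` is `Δt` times an expression continuous in `(Δt, Π)` near
`(0, Π₀)` (the inverse is taken near the invertible `γ • 1`), whose value at `Δt = 0` is the CARE
residual. It vanishes along `Π_Δt` for `Δt > 0`, hence in the limit.
-/

open Matrix Filter Topology

theorem Matrix.inv_smul_of_ne_zero {n K : Type*} [Fintype n] [DecidableEq n] [Field K]
    (A : Matrix n n K) {c : K} (hc : c ≠ 0) : (c • A)⁻¹ = c⁻¹ • A⁻¹ := by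
  by_cases hA : IsUnit A.det
  · simpa [Units.smul_def] using inv_smul' A (Units.mk0 c hc) hA
  · have hcA : ¬IsUnit (c • A).det := by simpa [det_smul, hc] using hA
    rw [nonsing_inv_apply_not_isUnit _ hA, nonsing_inv_apply_not_isUnit _ hcA, smul_zero]

section

variable {n k : Type*} [Fintype n] [Fintype k] [DecidableEq k]

noncomputable def discreteRiccatiMap (A : Matrix n n ℝ) (B : Matrix n k ℝ) (Q : Matrix n n ℝ)
    (R : Matrix k k ℝ) (P : Matrix n n ℝ) : Matrix n n ℝ :=
  Q + Aᵀ * P * A - Aᵀ * P * B * (R + Bᵀ * P * B)⁻¹ * Bᵀ * P * A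

end

section

variable {n : Type*} [Fintype n] [DecidableEq n]

noncomputable def consensusRiccatiQuotient (Atil : Matrix n n ℝ) (γ Δt : ℝ) (P : Matrix n n ℝ) :
    Matrix n n ℝ :=
  1 + Atilᵀ * P + P * Atil + Δt • (Atilᵀ * P * Atil)
    - (1 + Δt • Atil)ᵀ * P * (γ • 1 + Δt • P)⁻¹ * P * (1 + Δt • Atil)

theorem discreteRiccatiMap_sub_self_eq_smul (Atil P : Matrix n n ℝ) (γ : ℝ) {Δt : ℝ}
    (hΔt : Δt ≠ 0) :
    discreteRiccatiMap (1 + Δt • Atil) (Δt • (1 : Matrix n n ℝ)) (Δt • 1) ((Δt * γ) • 1) P - P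
      = Δt • consensusRiccatiQuotient Atil γ Δt P := by
  have hgain : (Δt * γ) • (1 : Matrix n n ℝ) + (Δt • 1)ᵀ * P * (Δt • 1)
      = Δt • (γ • 1 + Δt • P) := by
    simp only [transpose_smul, transpose_one, smul_mul_assoc, mul_smul_comm, mul_one, one_mul,
      smul_add, smul_smul]
  rw [discreteRiccatiMap, consensusRiccatiQuotient, hgain, inv_smul_of_ne_zero _ hΔt]
  set N := (γ • (1 : Matrix n n ℝ) + Δt • P)⁻¹
  simp only [transpose_add, transpose_smul, transpose_one, smul_mul_assoc, mul_smul_comm,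
    smul_smul, mul_one, one_mul, mul_add, add_mul, smul_add, smul_sub]
  match_scalars <;> field_simp
  ring

theorem consensusRiccatiQuotient_zero (Atil P : Matrix n n ℝ) {γ : ℝ} (hγ : γ ≠ 0) :
    consensusRiccatiQuotient Atil γ 0 P = Atilᵀ * P + P * Atil - γ⁻¹ • (P * P) + 1 := by
  simp only [consensusRiccatiQuotient, zero_smul, add_zero, transpose_one, one_mul, mul_one]
  rw [inv_smul_of_ne_zero _ hγ, inv_one, mul_smul_comm, mul_one, smul_mul_assoc]
  abel

theorem continuousAt_consensusRiccatiQuotient (Atil P : Matrix n n ℝ) {γ : ℝ} (hγ : γ ≠ 0) :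
    ContinuousAt (fun p : ℝ × Matrix n n ℝ => consensusRiccatiQuotient Atil γ p.1 p.2) (0, P) := by
  have hinv : ContinuousAt
      (fun p : ℝ × Matrix n n ℝ => (γ • (1 : Matrix n n ℝ) + p.1 • p.2)⁻¹) (0, P) := by
    refine ContinuousAt.comp (g := Inv.inv) ?_ (by fun_prop)
    refine continuousAt_matrix_inv _ ?_
    rw [Ring.inverse_eq_inv']
    exact continuousAt_inv₀ (by simp [hγ])
  unfold consensusRiccatiQuotient
  fun_prop

end

theorem stmt5_general (n : ℕ) (γ : ℝ) (hγ : 0 < γ)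
    (Atil : Matrix (Fin n) (Fin n) ℝ)
    (Pi : ℝ → Matrix (Fin n) (Fin n) ℝ)
    (hDARE : ∀ Δt : ℝ, 0 < Δt →
      Pi Δt = Δt • (1 : Matrix (Fin n) (Fin n) ℝ) +
        (1 + Δt • Atil)ᵀ * Pi Δt * (1 + Δt • Atil) -
        (1 + Δt • Atil)ᵀ * Pi Δt * (Δt • (1 : Matrix (Fin n) (Fin n) ℝ)) *
          ((Δt * γ) • (1 : Matrix (Fin n) (Fin n) ℝ) +
            (Δt • (1 : Matrix (Fin n) (Fin n) ℝ))ᵀ * Pi Δt *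
              (Δt • (1 : Matrix (Fin n) (Fin n) ℝ)))⁻¹ *
          (Δt • (1 : Matrix (Fin n) (Fin n) ℝ))ᵀ * Pi Δt * (1 + Δt • Atil))
    (Pi0 : Matrix (Fin n) (Fin n) ℝ)
    (hconv : Tendsto Pi (nhdsWithin 0 (Set.Ioi 0)) (nhds Pi0)) :
    Atilᵀ * Pi0 + Pi0 * Atil - γ⁻¹ • (Pi0 * Pi0) + 1 = 0 := by
  have hquot_eventually : ∀ᶠ t in 𝓝[>] 0, consensusRiccatiQuotient Atil γ t (Pi t) = 0 := by
    filter_upwards [self_mem_nhdsWithin] with t (ht : 0 < t)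
    have hfixed : discreteRiccatiMap (1 + t • Atil) (t • 1) (t • 1) ((t * γ) • 1) (Pi t)
        - Pi t = 0 := sub_eq_zero.2 (hDARE t ht).symm
    rw [discreteRiccatiMap_sub_self_eq_smul Atil (Pi t) γ ht.ne'] at hfixed
    exact (smul_eq_zero.1 hfixed).resolve_left ht.ne'
  have hquot_zero : Tendsto (fun t => consensusRiccatiQuotient Atil γ t (Pi t)) (𝓝[>] 0) (𝓝 0) :=
    tendsto_const_nhds.congr' (hquot_eventually.mono fun _ h => h.symm)
  have hpair : Tendsto (fun t => (t, Pi t)) (𝓝[>] 0) (𝓝 ((0 : ℝ), Pi0)) :=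
    (tendsto_id.mono_left nhdsWithin_le_nhds).prodMk_nhds hconv
  have hquot_care := (continuousAt_consensusRiccatiQuotient Atil Pi0 hγ.ne').tendsto.comp hpair
  rw [Function.comp_def, consensusRiccatiQuotient_zero Atil Pi0 hγ.ne'] at hquot_care
  exact tendsto_nhds_unique hquot_care hquot_zero

theorem stmt5 (n : ℕ) (γ : ℝ) (hγ : 0 < γ)
    (Atil : Matrix (Fin n) (Fin n) ℝ)
    (Pi : ℝ → Matrix (Fin n) (Fin n) ℝ)
    (hDARE : ∀ Δt : ℝ, 0 < Δt →
      Pi Δt = Δt • (1 : Matrix (Fin n) (Fin n) ℝ) +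
        (1 + Δt • Atil)ᵀ * Pi Δt * (1 + Δt • Atil) -
        (1 + Δt • Atil)ᵀ * Pi Δt * (Δt • (1 : Matrix (Fin n) (Fin n) ℝ)) *
          ((Δt * γ) • (1 : Matrix (Fin n) (Fin n) ℝ) +
            (Δt • (1 : Matrix (Fin n) (Fin n) ℝ))ᵀ * Pi Δt *
              (Δt • (1 : Matrix (Fin n) (Fin n) ℝ)))⁻¹ *
          (Δt • (1 : Matrix (Fin n) (Fin n) ℝ))ᵀ * Pi Δt * (1 + Δt • Atil))
    (Pi0 : Matrix (Fin n) (Fin n) ℝ) (hpsd : Pi0.PosSemidef)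
    (hconv : Tendsto Pi (nhdsWithin 0 (Set.Ioi 0)) (nhds Pi0)) :
    Atilᵀ * Pi0 + Pi0 * Atil - γ⁻¹ • (Pi0 * Pi0) + 1 = 0 :=
  stmt5_general n γ hγ Atil Pi hDARE Pi0 hconv
end
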